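/- For all n, twice the number of involutions in the demihyperoctahedral group D_n minus the number of involutions in the hyperoctahedral group B_n equals 0 if n is odd and equals n!/(n/2)! (equivalently 2^{n/2}·(n−1)!!) if n is even. Consequently i_n^D ≤ i_n^B ≤ 2·i_n^D. -/

import Mathlib

/-- Negation on `{±1,…,±n}`, modelled as `Fin n × ZMod 2` with `(i,s) ↦ (i,s+1)`. -/
def negPerm (n : ℕ) : Equiv.Perm (Fin n × ZMod 2) :=
  Equiv.prodCongr (Equiv.refl (Fin n)) (Equiv.addLeft (1 : ZMod 2))

/-- The hyperoctahedral group `B_n` of signed permutations: permutations of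
`{±1,…,±n}` commuting with negation. -/
def hyperoctahedral (n : ℕ) : Subgroup (Equiv.Perm (Fin n × ZMod 2)) :=
  Subgroup.centralizer {negPerm n}

/-- The number of involutions `i_n^B` in `B_n`. -/
noncomputable def iB (n : ℕ) : ℕ :=
  Nat.card {x : Equiv.Perm (Fin n × ZMod 2) // x ∈ hyperoctahedral n ∧ x ^ 2 = 1}


/-- The number of sign changes of a signed permutation `x`. -/
def negCount (n : ℕ) (x : Equiv.Perm (Fin n × ZMod 2)) : ℕ :=
  (Finset.univ.filter (fun i : Fin n => (x (i, (0 : ZMod 2))).2 = 1)).card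

/-- The number of involutions `i_n^D` in the demihyperoctahedral group `D_n`,
the index-2 subgroup of `B_n` of elements with an even number of sign changes. -/
noncomputable def iD (n : ℕ) : ℕ :=
  Nat.card {x : Equiv.Perm (Fin n × ZMod 2) //
    x ∈ hyperoctahedral n ∧ x ^ 2 = 1 ∧ Even (negCount n x)}

/-!
Write a signed involution as a pair `(σ, ε)`: an involution `σ` of `{1,…,n}` and a sign vector
`ε : {1,…,n} → ℤ/2` constant on the orbits of `σ`; it lies in `D_n` iff `∑ ε = 0`. For a fixed `σ`
the invariant sign vectors form a group on which the parity `ε ↦ ∑ ε` is either onto (when `σ`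
fixes some `i`, the indicator of `i` is invariant and odd), so that exactly half of them are even,
or identically zero (when `σ` is fixed-point free its orbits are pairs). Hence `2 i_n^D - i_n^B`
counts the fixed-point-free involutions, `(n-1)!!` of them (cycle type `2^{n/2}`), each with
`2^{n/2}` invariant sign vectors.
-/

open Equiv Finset Function
open scoped Nat

theorem Equiv.Perm.sq_eq_one_iff_involutive {α : Type*} (σ : Perm α) :
    σ ^ 2 = 1 ↔ Involutive σ := by
  simp [Involutive, Perm.ext_iff, sq]

theorem AddSubgroup.card_inf_ker_mul_card_map {G G' : Type*} [AddGroup G] [AddGroup G']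
    (H : AddSubgroup G) (f : G →+ G') :
    Nat.card ↥(H ⊓ f.ker) * Nat.card ↥(H.map f) = Nat.card H := by
  have := AddSubgroup.relIndex_inf_mul_relIndex ⊥ f.ker H
  rwa [AddSubgroup.relIndex_ker, bot_inf_eq, AddSubgroup.relIndex_bot_left,
    AddSubgroup.relIndex_bot_left, inf_comm] at this

theorem Nat.card_subtype_prod_and {X Y : Type*} [Fintype X] [Finite Y] (P : X → Prop)
    [DecidablePred P] (Q : X → Y → Prop) :
    Nat.card {p : X × Y // P p.1 ∧ Q p.1 p.2} = ∑ x with P x, Nat.card {y // Q x y} := by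
  rw [Nat.card_congr (subtypeProdEquivSigmaSubtype fun x y => P x ∧ Q x y), Nat.card_sigma,
    sum_filter]
  refine sum_congr rfl fun x _ => ?_
  split_ifs with hx
  · simp only [hx, true_and]
  · simp [hx]

theorem Nat.factorial_two_mul_eq (k : ℕ) : (2 * k)! = 2 ^ k * k ! * (2 * k - 1)‼ := by
  rcases k with _ | k
  · rfl
  · rw [show 2 * (k + 1) = 2 * k + 1 + 1 by ring, Nat.factorial_eq_mul_doubleFactorial,
      show 2 * k + 1 + 1 = 2 * (k + 1) by ring, Nat.doubleFactorial_two_mul,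
      show 2 * (k + 1) - 1 = 2 * k + 1 by omega]

theorem Nat.factorial_two_mul_div_factorial (k : ℕ) : (2 * k)! / k ! = 2 ^ k * (2 * k - 1)‼ := by
  rw [factorial_two_mul_eq, mul_right_comm, Nat.mul_div_cancel _ k.factorial_pos]

namespace Equiv.Perm
variable {α : Type*} [Fintype α] [DecidableEq α]

theorem sq_eq_one_and_forall_ne_iff_cycleType {σ : Perm α} {k : ℕ}
    (hk : Fintype.card α = 2 * k) :
    (σ ^ 2 = 1 ∧ ∀ i, σ i ≠ i) ↔ σ.cycleType = Multiset.replicate k 2 := by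
  have hsupp : (∀ i, σ i ≠ i) ↔ σ.cycleType.sum = 2 * k := by
    simp only [sum_cycleType, ← hk, card_eq_iff_eq_univ, eq_univ_iff_forall, mem_support]
  rw [pow_prime_eq_one_iff, hsupp]
  constructor
  · rintro ⟨h2, hsum⟩
    rw [Multiset.eq_replicate_card.mpr h2, Multiset.sum_replicate, smul_eq_mul] at hsum
    exact Multiset.eq_replicate.mpr ⟨by omega, h2⟩
  · intro h
    simp +contextual [h, mul_comm, Multiset.mem_replicate]

theorem card_sq_eq_one_and_forall_ne :
    #{σ : Perm α | σ ^ 2 = 1 ∧ ∀ i, σ i ≠ i} =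
      if Even (Fintype.card α) then (Fintype.card α - 1)‼ else 0 := by
  split_ifs with hev
  · obtain ⟨k, hk⟩ := hev
    rw [← two_mul] at hk
    have hcount := card_of_cycleType_mul_eq α (Multiset.replicate k 2)
    have hprod : ∏ n ∈ (Multiset.replicate k 2).toFinset,
        (Multiset.count n (Multiset.replicate k 2))! = k ! := by
      rcases k.eq_zero_or_pos with rfl | hk0
      · rfl
      · simp [Multiset.toFinset_replicate, hk0.ne']
    rw [if_pos ⟨by simp [hk, mul_comm], by simp +contextual [Multiset.mem_replicate]⟩, hprod,
      Multiset.sum_replicate, Multiset.prod_replicate, hk, smul_eq_mul, mul_comm k, Nat.sub_self,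
      Nat.factorial_zero, one_mul, Nat.factorial_two_mul_eq] at hcount
    rw [filter_congr fun σ _ => sq_eq_one_and_forall_ne_iff_cycleType hk, hk]
    exact Nat.eq_of_mul_eq_mul_right (by positivity) (hcount.trans (mul_comm _ _))
  · rw [Finset.card_eq_zero, filter_eq_empty_iff]
    rintro σ - ⟨hσ, hfix⟩
    have hsupp : σ.support = univ := eq_univ_of_forall fun i => mem_support.mpr (hfix i)
    exact hev (even_iff_two_dvd.mpr (card_univ (α := α) ▸ hsupp ▸ two_dvd_card_support hσ))

end Equiv.Perm

theorem card_invariant_funs_of_involutive {α β : Type*} [Fintype α] {σ : Perm α}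
    (hσ : Involutive σ) (hfix : ∀ i, σ i ≠ i) :
    Nat.card {f : α → β // ∀ i, f (σ i) = f i} = Nat.card β ^ (Fintype.card α / 2) := by
  let : LinearOrder α := LinearOrder.lift' _ (Fintype.equivFin α).injective
  have hmin (i : α) : min i (σ i) < σ (min i (σ i)) := by
    rcases min_choice i (σ i) with h | h <;> rw [h]
    · exact (min_eq_left_iff.mp h).lt_of_ne (hfix i).symm
    · rw [hσ]; exact (min_eq_right_iff.mp h).lt_of_ne (hfix i)
  -- `{i | i < σ i}` meets every orbit `{i, σ i}` exactly once
  let e : {f : α → β // ∀ i, f (σ i) = f i} ≃ ({i // i < σ i} → β) :=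
    { toFun f i := f.1 i
      invFun g := ⟨fun i => g ⟨min i (σ i), hmin i⟩,
        fun i => congrArg g (Subtype.ext (by simp only [hσ i, min_comm]))⟩
      left_inv f := Subtype.ext <| funext fun i => by
        rcases min_choice i (σ i) with h | h <;> simp only [h, f.2]
      right_inv g := funext fun i => congrArg g (Subtype.ext (min_eq_left i.2.le)) }
  have hswap (i : α) : ¬ i < σ i ↔ σ i < σ (σ i) := by rw [hσ, not_lt, (hfix i).le_iff_lt]
  have hhalf : #{i | ¬ i < σ i} = #{i | i < σ i} :=
    Finset.card_nbij' σ σ (fun i hi => by simpa [hswap] using hi)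
      (fun i hi => by simpa [hswap, hσ i] using hi) (fun i _ => hσ i) (fun i _ => hσ i)
  have hcard := Finset.card_filter_add_card_filter_not (s := univ) (fun i => i < σ i)
  rw [Nat.card_congr e, Nat.card_fun, Nat.card_eq_fintype_card (α := {i // i < σ i}),
    Fintype.card_subtype]
  rw [Finset.card_univ, hhalf] at hcard
  congr 1
  omega

section Signs

variable {α : Type*} [Fintype α]

def invariantSigns (σ : Perm α) : AddSubgroup (α → ZMod 2) where
  carrier := {ε | ∀ i, ε (σ i) = ε i}
  add_mem' ha hb i := by simp [ha i, hb i]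
  zero_mem' _ := rfl
  neg_mem' ha i := by simp [ha i]

def parity : (α → ZMod 2) →+ ZMod 2 where
  toFun ε := ∑ i, ε i
  map_zero' := by simp
  map_add' _ _ := Finset.sum_add_distrib

theorem parity_eq_zero_iff_even (ε : α → ZMod 2) : parity ε = 0 ↔ Even #{i | ε i = 1} := by
  have h : parity ε = #{i | ε i = 1} := by
    rw [Finset.natCast_card_filter]
    exact Finset.sum_congr rfl fun i _ => by generalize ε i = s; revert s; decide
  rw [h, ZMod.natCast_eq_zero_iff_even]

theorem invariantSigns_le_ker_parity {σ : Perm α} (hσ : Involutive σ) (hfix : ∀ i, σ i ≠ i) :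
    invariantSigns σ ≤ parity.ker := fun ε hε =>
  Finset.sum_ninvolution σ (fun i => by rw [hε i, CharTwo.add_self_eq_zero]) (fun i _ => hfix i)
    (fun _ => Finset.mem_univ _) hσ

theorem card_invariantSigns {σ : Perm α} (hσ : Involutive σ)
    (hfix : ∀ i, σ i ≠ i) : Nat.card (invariantSigns σ) = 2 ^ (Fintype.card α / 2) :=
  (card_invariant_funs_of_involutive hσ hfix).trans (by rw [Nat.card_zmod])

variable [DecidableEq α]

theorem map_parity_invariantSigns_eq_top {σ : Perm α} {i₀ : α} (hi₀ : σ i₀ = i₀) :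
    (invariantSigns σ).map parity = ⊤ := by
  have hmem : Pi.single i₀ 1 ∈ invariantSigns σ := fun i => by
    by_cases hi : i = i₀
    · rw [hi, hi₀]
    · rw [Pi.single_eq_of_ne hi, Pi.single_eq_of_ne (hi₀ ▸ σ.injective.ne hi)]
  have hone : (1 : ZMod 2) ∈ (invariantSigns σ).map parity :=
    ⟨_, hmem, Finset.sum_pi_single' i₀ 1 univ |>.trans (if_pos (mem_univ _))⟩
  rw [AddSubgroup.eq_top_iff']
  intro x
  fin_cases x
  exacts [AddSubgroup.zero_mem _, hone]

theorem two_mul_card_invariantSigns_inf_ker (σ : Perm α) (hσ : Involutive σ) :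
    2 * Nat.card ↥(invariantSigns σ ⊓ parity.ker) =
      Nat.card (invariantSigns σ) + if ∀ i, σ i ≠ i then Nat.card (invariantSigns σ) else 0 := by
  rw [← (invariantSigns σ).card_inf_ker_mul_card_map parity]
  split_ifs with hfix
  · have hker := invariantSigns_le_ker_parity hσ hfix
    rw [inf_of_le_left hker, (AddSubgroup.map_eq_bot_iff _).mpr hker, AddSubgroup.card_bot]
    ring
  · push Not at hfix
    obtain ⟨i₀, hi₀⟩ := hfix
    rw [map_parity_invariantSigns_eq_top hi₀, AddSubgroup.card_top, Nat.card_zmod]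
    ring

theorem two_mul_sum_card_invariantSigns_inf_ker :
    2 * ∑ σ : Perm α with σ ^ 2 = 1, Nat.card ↥(invariantSigns σ ⊓ parity.ker) =
      ∑ σ : Perm α with σ ^ 2 = 1, Nat.card (invariantSigns σ) +
        if Even (Fintype.card α) then 2 ^ (Fintype.card α / 2) * (Fintype.card α - 1)‼ else 0 := by
  rw [mul_sum, sum_congr rfl fun σ hσ => two_mul_card_invariantSigns_inf_ker σ
    ((Perm.sq_eq_one_iff_involutive σ).mp (mem_filter.mp hσ).2), sum_add_distrib]
  congr 1
  calc _ = ∑ σ : Perm α with σ ^ 2 = 1 ∧ ∀ i, σ i ≠ i, Nat.card (invariantSigns σ) := by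
        rw [← filter_filter]
        exact (sum_filter (fun σ : Perm α => ∀ i, σ i ≠ i) _).symm
    _ = _ := by
        rw [sum_congr rfl fun σ hσ => card_invariantSigns
          ((Perm.sq_eq_one_iff_involutive σ).mp (mem_filter.mp hσ).2.1) (mem_filter.mp hσ).2.2,
          sum_const, Perm.card_sq_eq_one_and_forall_ne, smul_eq_mul]
        split_ifs <;> ring

end Signs

section SignedPerm

variable {n : ℕ}

def signedPerm (p : Perm (Fin n) × (Fin n → ZMod 2)) : Perm (Fin n × ZMod 2) :=
  prodShear p.1 fun i => Equiv.addLeft (p.2 i)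

@[simp]
theorem signedPerm_apply (p : Perm (Fin n) × (Fin n → ZMod 2)) (i : Fin n) (s : ZMod 2) :
    signedPerm p (i, s) = (p.1 i, p.2 i + s) := rfl

theorem mem_hyperoctahedral_iff {x : Perm (Fin n × ZMod 2)} :
    x ∈ hyperoctahedral n ↔ ∀ i s, x (i, 1 + s) = ((x (i, s)).1, 1 + (x (i, s)).2) := by
  simp only [hyperoctahedral, Subgroup.mem_centralizer_singleton_iff, Perm.ext_iff,
    Perm.mul_apply, Prod.forall]
  rfl

theorem apply_eq_of_mem_hyperoctahedral {x : Perm (Fin n × ZMod 2)} (hx : x ∈ hyperoctahedral n)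
    (i : Fin n) (s : ZMod 2) : x (i, s) = ((x (i, 0)).1, (x (i, 0)).2 + s) := by
  obtain rfl | rfl : s = 0 ∨ s = 1 := by revert s; decide
  · rw [add_zero]
  · have h := mem_hyperoctahedral_iff.mp hx i 0
    rwa [add_zero, add_comm] at h

theorem signedPerm_mem_hyperoctahedral (p : Perm (Fin n) × (Fin n → ZMod 2)) :
    signedPerm p ∈ hyperoctahedral n :=
  mem_hyperoctahedral_iff.mpr fun i s => by simp [add_left_comm]

theorem signedPerm_injective : Injective (signedPerm (n := n)) := fun p q h => by
  have h0 (i : Fin n) := congrArg (· (i, 0)) h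
  simp only [signedPerm_apply, add_zero, Prod.mk.injEq] at h0
  exact Prod.ext (Perm.ext fun i => (h0 i).1) (funext fun i => (h0 i).2)

theorem exists_signedPerm_eq {x : Perm (Fin n × ZMod 2)} (hx : x ∈ hyperoctahedral n) :
    ∃ p, signedPerm p = x := by
  have hx' := apply_eq_of_mem_hyperoctahedral (inv_mem hx)
  have hx := apply_eq_of_mem_hyperoctahedral hx
  let σ : Perm (Fin n) :=
    { toFun i := (x (i, 0)).1
      invFun i := (x⁻¹ (i, 0)).1
      left_inv i := by
        simpa using congrArg Prod.fst ((hx' _ _).symm.trans (x.symm_apply_apply (i, 0)))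
      right_inv i := by
        simpa using congrArg Prod.fst ((hx _ _).symm.trans (x.apply_symm_apply (i, 0))) }
  exact ⟨(σ, fun i => (x (i, 0)).2), Perm.ext fun ⟨i, s⟩ => (hx i s).symm⟩

theorem signedPerm_sq_eq_one_iff (p : Perm (Fin n) × (Fin n → ZMod 2)) :
    signedPerm p ^ 2 = 1 ↔ p.1 ^ 2 = 1 ∧ p.2 ∈ invariantSigns p.1 := by
  simp only [Perm.sq_eq_one_iff_involutive, Involutive, Prod.forall, signedPerm_apply,
    Prod.mk.injEq]
  refine ⟨fun h => ⟨fun i => (h i 0).1, fun i => ?_⟩, fun ⟨h1, h2⟩ i s => ⟨h1 i, ?_⟩⟩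
  · simpa [CharTwo.add_eq_zero] using (h i 0).2
  · rw [h2 i, CharTwo.add_cancel_left]

theorem negCount_signedPerm (p : Perm (Fin n) × (Fin n → ZMod 2)) :
    negCount n (signedPerm p) = #{i | p.2 i = 1} := by
  simp [negCount]

theorem card_hyperoctahedral_subtype (P : Perm (Fin n × ZMod 2) → Prop) :
    Nat.card {x // x ∈ hyperoctahedral n ∧ P x} = Nat.card {p // P (signedPerm p)} :=
  Nat.card_congr <| .symm <|
    .ofBijective (fun p => ⟨signedPerm p, signedPerm_mem_hyperoctahedral _, p.2⟩)
    ⟨fun p q h => Subtype.ext (signedPerm_injective (congrArg Subtype.val h)),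
     fun ⟨x, hx, hP⟩ => by
      obtain ⟨p, rfl⟩ := exists_signedPerm_eq hx
      exact ⟨⟨p, hP⟩, rfl⟩⟩

end SignedPerm

theorem iB_eq_sum (n : ℕ) :
    iB n = ∑ σ : Perm (Fin n) with σ ^ 2 = 1, Nat.card (invariantSigns σ) := by
  rw [iB, card_hyperoctahedral_subtype, ← Nat.card_subtype_prod_and]
  exact Nat.card_congr (subtypeEquivRight signedPerm_sq_eq_one_iff)

theorem iD_eq_sum (n : ℕ) :
    iD n = ∑ σ : Perm (Fin n) with σ ^ 2 = 1, Nat.card ↥(invariantSigns σ ⊓ parity.ker) := by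
  rw [iD, card_hyperoctahedral_subtype (fun x => x ^ 2 = 1 ∧ Even (negCount n x)),
    ← Nat.card_subtype_prod_and]
  refine Nat.card_congr (subtypeEquivRight fun p => ?_)
  rw [signedPerm_sq_eq_one_iff, negCount_signedPerm, ← parity_eq_zero_iff_even, and_assoc]
  rfl

theorem two_mul_iD (n : ℕ) :
    2 * iD n = iB n + if Even n then 2 ^ (n / 2) * (n - 1)‼ else 0 := by
  rw [iD_eq_sum, iB_eq_sum, two_mul_sum_card_invariantSigns_inf_ker, Fintype.card_fin]

theorem iD_le_iB (n : ℕ) : iD n ≤ iB n :=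
  Nat.card_le_card_of_injective (Subtype.map id fun _ hx => ⟨hx.1, hx.2.1⟩)
    (Subtype.map_injective _ injective_id)

/-- `2 i_n^D − i_n^B` is `0` for odd `n` and `n!/(n/2)!` (equivalently
`2^{n/2} (n−1)!!`) for even `n`; consequently `i_n^D ≤ i_n^B ≤ 2 i_n^D`. -/
theorem two_iD_sub_iB (n : ℕ) :
    (2 * iD n = iB n +
      if Even n then Nat.factorial n / Nat.factorial (n / 2) else 0) ∧
    (¬ Even n → 2 * iD n = iB n) ∧
    (Even n → 2 * iD n - iB n = 2 ^ (n / 2) * Nat.doubleFactorial (n - 1)) ∧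
    iD n ≤ iB n ∧ iB n ≤ 2 * iD n := by
  have key := two_mul_iD n
  refine ⟨?_, fun hn => by simpa [hn] using key, fun hn => by simp only [key, hn, if_true]; omega,
    iD_le_iB n, by omega⟩
  split_ifs at key ⊢ with hn
  · obtain ⟨k, rfl⟩ := hn
    simpa only [← two_mul, Nat.mul_div_cancel_left k two_pos,
      Nat.factorial_two_mul_div_factorial] using key
  · exact key
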